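/- Let A and B be bounded linear operators on a Banach space such that A - B is invertible, with R = (A-B)⁻¹ and S = R[A,B]R. Then for every real t, e^{tA} = (d/dt)(e^{tA} R e^{-tB}) · e^{tB} - e^{tA} S, where the derivative is taken in operator norm. -/

import Mathlib

/-!
Differentiating the product gives `d/dt (e^{tA} R e^{-tB}) = e^{tA} (AR - RB) e^{-tB}`, so multiplying
by `e^{tB}` on the right leaves `e^{tA} (AR - RB)`. Since `R` is a two-sided inverse of `A - B`,
`AR - RB = 1 + R[A,B]R`, which is the claim.
-/

open NormedSpace

theorem mul_sub_mul_eq_one_add_mul_commutator_mul {α : Type*} [Ring α] {A B R : α}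
    (hl : R * (A - B) = 1) (hr : (A - B) * R = 1) :
    A * R - R * B = 1 + R * (A * B - B * A) * R := by
  have hRA : R * A = 1 + R * B := by rw [← hl]; noncomm_ring
  have hAR : A * R = 1 + B * R := by rw [← hr]; noncomm_ring
  calc A * R - R * B = 1 + (B * R - R * B) := by rw [hAR]; noncomm_ring
    _ = 1 + ((R * A) * B * R - R * B * (A * R)) := by rw [hRA, hAR]; noncomm_ring
    _ = 1 + R * (A * B - B * A) * R := by noncomm_ring

theorem exp_neg_mul_exp {𝔸 : Type*} [NormedRing 𝔸] [NormedAlgebra ℚ 𝔸] [CompleteSpace 𝔸]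
    (x : 𝔸) : exp (-x) * exp x = 1 := by
  rw [← exp_add_of_commute (Commute.refl x).neg_left, neg_add_cancel, exp_zero]

theorem hasDerivAt_exp_smul_mul_mul_exp_neg_smul {𝕂 𝔸 : Type*} [RCLike 𝕂] [NormedRing 𝔸]
    [NormedAlgebra 𝕂 𝔸] [CompleteSpace 𝔸] (A B R : 𝔸) (t : 𝕂) :
    HasDerivAt (fun s : 𝕂 => exp (s • A) * R * exp (-(s • B)))
      (exp (t • A) * (A * R - R * B) * exp (-(t • B))) t := by
  have hB : HasDerivAt (fun s : 𝕂 => exp (-(s • B))) (-B * exp (-(t • B))) t := by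
    simpa only [smul_neg] using hasDerivAt_exp_smul_const' (-B) t
  refine (((hasDerivAt_exp_smul_const A t).mul_const R).mul hB).congr_deriv ?_
  noncomm_ring

/-- Exponent derivative representation: if `R = (A-B)⁻¹` and `S = R[A,B]R`, then
`e^{tA} = (d/dt)(e^{tA} R e^{-tB}) e^{tB} - e^{tA} S`. -/
theorem exp_deriv_representation {𝔸 : Type*} [NormedRing 𝔸] [NormedAlgebra ℝ 𝔸]
    [CompleteSpace 𝔸] (A B R S : 𝔸)
    (h1 : R * (A - B) = 1) (h2 : (A - B) * R = 1)
    (hS : S = R * (A * B - B * A) * R) (t : ℝ) :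
    exp (t • A)
      = deriv (fun s : ℝ => exp (s • A) * R * exp (-(s • B))) t * exp (t • B)
        - exp (t • A) * S := by
  let : NormedAlgebra ℚ 𝔸 := NormedAlgebra.restrictScalars ℚ ℝ 𝔸
  rw [(hasDerivAt_exp_smul_mul_mul_exp_neg_smul A B R t).deriv, mul_assoc _ (exp _),
    exp_neg_mul_exp, mul_one, mul_sub_mul_eq_one_add_mul_commutator_mul h1 h2, ← hS, mul_add,
    mul_one, add_sub_cancel_right]
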